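/- arXiv:1807.06341 — 2 statements merged into one kernel-verified Lean document; each statement's English description precedes it below -/
import Mathlib

section
/- Assume the Framework with Ω = 𝔻, the open unit disk, and suppose the shift operator satisfies ‖S‖ ≤ 1. If (w_j)_{j ≥ 1} ⊂ 𝔻 ∖ {0} is a sequence for which there exists g ∈ H ∖ {0} with ι g vanishing at each w (w ∈ 𝔻) to order at least #{j : w_j = w}, and if (v_i)_{i ≥ 1} ⊂ 𝔻 ∖ {0} satisfies the Blaschke condition ∑_{i ≥ 1} (1 − |v_i|) < ∞, then there exists h ∈ H ∖ {0} such that for every w ∈ 𝔻 the function ι h vanishes at w to order at least #{j : w_j = w} + #{i : v_i = w}; that is, the union of a zero set for H with a Blaschke sequence is again a zero set for H. -/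
open scoped ComplexInnerProductSpace

/-- A Hilbert space `H` of analytic functions on a bounded domain `Ω ⊆ ℂ` with `0 ∈ Ω`,
realized by an injective linear map `ι` into functions, satisfying conditions
(P1)–(P4) of Cheng–Mashreghi–Ross, together with its reproducing kernels. -/
structure RKFramework (Ω : Set ℂ) (H : Type*) [NormedAddCommGroup H]
    [InnerProductSpace ℂ H] [CompleteSpace H] where
  /-- `Ω` is open. -/
  isOpen : IsOpen Ω
  /-- `Ω` is connected. -/
  isConnected : IsConnected Ω
  /-- `Ω` is bounded. -/
  isBounded : Bornology.IsBounded Ω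
  /-- `0 ∈ Ω`. -/
  zero_mem : (0 : ℂ) ∈ Ω
  /-- the realization of elements of `H` as functions (only values on `Ω` matter). -/
  ι : H →ₗ[ℂ] (ℂ → ℂ)
  /-- `ι` is injective as a map into functions on `Ω`. -/
  ι_inj : ∀ f g : H, Set.EqOn (ι f) (ι g) Ω → f = g
  /-- each `ι f` is analytic on `Ω`. -/
  analytic : ∀ f : H, DifferentiableOn ℂ (ι f) Ω
  /-- (P1): point evaluation of every derivative is a bounded functional. -/
  eval_bounded : ∀ w ∈ Ω, ∀ j : ℕ, ∃ C : ℝ, ∀ f : H,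
    ‖iteratedDerivWithin j (ι f) Ω w‖ ≤ C * ‖f‖
  /-- (P2): the shift operator `S`. -/
  S : H →L[ℂ] H
  ι_S : ∀ f : H, ∀ z ∈ Ω, ι (S f) z = z * ι f z
  /-- (P3): the monomials `z^j` belong to `H` … -/
  p : ℕ → H
  ι_p : ∀ j : ℕ, ∀ z ∈ Ω, ι (p j) z = z ^ j
  /-- … and the polynomials are dense in `H`. -/
  span_p : (Submodule.span ℂ (Set.range p)).topologicalClosure = ⊤
  /-- (P4): the difference-quotient operators `Q_w`. -/
  Q : ℂ → H →L[ℂ] H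
  ι_Q : ∀ w ∈ Ω, ∀ f : H, ∀ z ∈ Ω, z ≠ w → ι (Q w f) z = (ι f z - ι f w) / (z - w)
  /-- the reproducing kernel `k_w` at `w ∈ Ω` … -/
  k : ℂ → H
  /-- … satisfying `⟪f, k_w⟫ = (ι f)(w)` (with the paper's inner product linear in its
  first slot; Mathlib's inner product is linear in the second slot). -/
  reproducing : ∀ w ∈ Ω, ∀ f : H, ⟪k w, f⟫ = ι f w

variable {Ω : Set ℂ} {H : Type*} [NormedAddCommGroup H] [InnerProductSpace ℂ H] [CompleteSpace H]

/-- `[zf]`: the closed linear span of `{S^n f : n ≥ 1}`. -/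
abbrev RKFramework.zspan (F : RKFramework Ω H) (f : H) : Submodule ℂ H :=
  (Submodule.span ℂ {x | ∃ n : ℕ, 1 ≤ n ∧ x = (F.S ^ n) f}).topologicalClosure

/-- `[f]`: the closed linear span of `{S^n f : n ≥ 0}`. -/
abbrev RKFramework.fullSpan (F : RKFramework Ω H) (f : H) : Submodule ℂ H :=
  (Submodule.span ℂ (Set.range fun n : ℕ => (F.S ^ n) f)).topologicalClosure

/-- The `S`-inner function `J = f − P_{[zf]} f` associated with `f`. -/
noncomputable def RKFramework.J (F : RKFramework Ω H) (f : H) : H :=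
  f - ((F.zspan f).orthogonalProjection f : H)

/-!
For `v ∈ 𝔻 ∖ {0}` the operator `(v̄ / |v|) (v - S) (1 - v̄ S)⁻¹` multiplies `ι f` by the Blaschke
factor `b_v(z) = (v̄ / |v|) (v - z) / (1 - v̄ z)`, and it is a contraction because `‖S‖ ≤ 1`.
Applying these operators for `v_0, …, v_{n-1}` to `g` gives a bounded sequence `g_n` with
`ι g_n = B_n · ι g`, where `B_n` are the partial Blaschke products. The Blaschke condition makes
`B_n` converge on `𝔻` to a product `B` vanishing only on the `v_i`, so `⟪g_n, k_z⟫` converges for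
every kernel; since the kernels are total and `g_n` is bounded, `g_n` converges weakly to some `h`
with `ι h = B · ι g`. Near each `z`, `B = O((· - z) ^ m)` with `m = #{i | v_i = z}`, so the order
of `ι h` at `z` is at least that of `ι g` plus `m`. Finally `h ≠ 0`, because `ι g` is nonzero
somewhere off the countable set `{v_i}`, where `B` does not vanish.
-/

open Filter Topology Asymptotics Set ComplexConjugate
open scoped InnerProductSpace

section AnalyticOrder

variable {𝕜 E : Type*} [NontriviallyNormedField 𝕜] [NormedAddCommGroup E] [NormedSpace 𝕜 E]
  {f : 𝕜 → E} {z₀ : 𝕜}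

theorem AnalyticAt.natCast_le_analyticOrderAt_iff_isBigO (hf : AnalyticAt 𝕜 f z₀) {n : ℕ} :
    n ≤ analyticOrderAt f z₀ ↔ f =O[𝓝 z₀] fun z => (z - z₀) ^ n := by
  constructor
  · intro h
    obtain ⟨u, hu, hfu⟩ := (natCast_le_analyticOrderAt hf).1 h
    have hu1 : u =O[𝓝 z₀] fun _ => (1 : 𝕜) := hu.continuousAt.tendsto.isBigO_one 𝕜
    exact (EventuallyEq.trans_isBigO hfu ((isBigO_refl (fun z => (z - z₀) ^ n) _).smul hu1))
      |>.congr_right fun z => smul_eq_mul _ _ |>.trans (mul_one _)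
  · intro h
    by_contra! hlt
    have htop : analyticOrderAt f z₀ ≠ ⊤ := hlt.ne_top
    obtain ⟨u, hu, hu0, hfu⟩ := hf.analyticOrderAt_ne_top.1 htop
    set m := analyticOrderNatAt f z₀
    have hmn : m < n := by rwa [← Nat.cast_analyticOrderNatAt htop, Nat.cast_lt] at hlt
    obtain ⟨C, hC⟩ := h.bound
    -- `f = (z - z₀) ^ m • u` with `m < n` forces `u` to vanish at `z₀`
    have hu_bound : ∀ᶠ z in 𝓝[≠] z₀, ‖u z‖ ≤ C * ‖z - z₀‖ ^ (n - m) := by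
      filter_upwards [self_mem_nhdsWithin, nhdsWithin_le_nhds (hfu.and hC)] with z hz ⟨hfz, hCz⟩
      have hpos : 0 < ‖z - z₀‖ ^ m := pow_pos (norm_pos_iff.2 (sub_ne_zero.2 hz)) m
      rw [hfz, norm_smul, norm_pow, norm_pow, ← Nat.add_sub_of_le hmn.le, pow_add] at hCz
      nlinarith
    have hlim : Tendsto (fun z => C * ‖z - z₀‖ ^ (n - m)) (𝓝 z₀) (𝓝 0) := by
      have : ContinuousAt (fun z => C * ‖z - z₀‖ ^ (n - m)) z₀ := by fun_prop
      simpa [Nat.sub_ne_zero_of_lt hmn] using this.tendsto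
    exact hu0 <| tendsto_nhds_unique (hu.continuousAt.tendsto.mono_left nhdsWithin_le_nhds)
      (squeeze_zero_norm' hu_bound (hlim.mono_left nhdsWithin_le_nhds))

theorem AnalyticAt.analyticOrderAt_add_le_of_eventuallyEq_mul {f g B : 𝕜 → 𝕜} {b : ℕ}
    (hf : AnalyticAt 𝕜 f z₀) (hg : AnalyticAt 𝕜 g z₀) (hfg : f =ᶠ[𝓝 z₀] B * g)
    (hB : B =O[𝓝 z₀] fun z => (z - z₀) ^ b) :
    analyticOrderAt g z₀ + b ≤ analyticOrderAt f z₀ := by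
  cases h : analyticOrderAt g z₀ using ENat.recTopCoe with
  | top =>
    have hf0 : analyticOrderAt f z₀ = ⊤ := analyticOrderAt_eq_top.2 <| by
      filter_upwards [hfg, analyticOrderAt_eq_top.1 h] with z hfz hgz
      simp [hfz, hgz]
    simp [hf0]
  | coe a =>
    rw [← Nat.cast_add, hf.natCast_le_analyticOrderAt_iff_isBigO]
    have hga := hg.natCast_le_analyticOrderAt_iff_isBigO.1 h.ge
    exact (hfg.trans_isBigO (hB.mul hga)).congr_right fun z => by ring

theorem AnalyticAt.le_analyticOrderAt_iff_iteratedDeriv_eq_zero [CharZero 𝕜] [CompleteSpace E]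
    (hf : AnalyticAt 𝕜 f z₀) {m : ℕ∞} :
    m ≤ analyticOrderAt f z₀ ↔ ∀ s : ℕ, (s : ℕ∞) < m → iteratedDeriv s f z₀ = 0 := by
  rw [← ENat.forall_natCast_le_iff_le]
  simp_rw [natCast_le_analyticOrderAt_iff_iteratedDeriv_eq_zero hf]
  exact ⟨fun h s hs => h (s + 1) (Order.add_one_le_of_lt hs) s s.lt_succ_self,
    fun h a ha i hi => h i ((Nat.cast_lt.2 hi).trans_le ha)⟩

theorem AnalyticAt.le_analyticOrderAt_iff_iteratedDerivWithin_eq_zero [CharZero 𝕜]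
    [CompleteSpace E] {U : Set 𝕜} (hU : IsOpen U) (hz₀ : z₀ ∈ U) (hf : AnalyticAt 𝕜 f z₀)
    {m : ℕ∞} :
    m ≤ analyticOrderAt f z₀ ↔ ∀ s : ℕ, (s : ℕ∞) < m → iteratedDerivWithin s f U z₀ = 0 := by
  simp only [hf.le_analyticOrderAt_iff_iteratedDeriv_eq_zero, iteratedDerivWithin_of_isOpen hU hz₀]

end AnalyticOrder

section BlaschkeFactor

noncomputable def blaschkeFactor (v z : ℂ) : ℂ :=
  conj v / ‖v‖ * ((v - z) / (1 - conj v * z))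

variable {v z : ℂ}

theorem one_sub_norm_mul_norm_le_norm_one_sub_conj_mul (v z : ℂ) :
    1 - ‖v‖ * ‖z‖ ≤ ‖1 - conj v * z‖ := by
  simpa using norm_sub_norm_le (1 : ℂ) (conj v * z)

theorem one_sub_conj_mul_ne_zero (hv : ‖v‖ ≤ 1) (hz : ‖z‖ < 1) : 1 - conj v * z ≠ 0 := by
  have hle := one_sub_norm_mul_norm_le_norm_one_sub_conj_mul v z
  have hlt : ‖v‖ * ‖z‖ < 1 := by nlinarith [norm_nonneg v, norm_nonneg z]
  exact norm_pos_iff.1 (by linarith)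

theorem norm_sub_le_norm_one_sub_conj_mul (hv : ‖v‖ ≤ 1) (hz : ‖z‖ ≤ 1) :
    ‖v - z‖ ≤ ‖1 - conj v * z‖ := by
  have key : Complex.normSq (1 - conj v * z) - Complex.normSq (v - z)
      = (1 - Complex.normSq v) * (1 - Complex.normSq z) := by
    simp only [Complex.normSq_apply, Complex.mul_re, Complex.mul_im, Complex.sub_re,
      Complex.sub_im, Complex.one_re, Complex.one_im, Complex.conj_re, Complex.conj_im]
    ring
  rw [← sq_le_sq₀ (norm_nonneg _) (norm_nonneg _), Complex.sq_norm, Complex.sq_norm]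
  simp only [← Complex.sq_norm] at key ⊢
  have : 0 ≤ (1 - ‖v‖ ^ 2) * (1 - ‖z‖ ^ 2) :=
    mul_nonneg (by nlinarith [norm_nonneg v]) (by nlinarith [norm_nonneg z])
  linarith

theorem norm_blaschkeFactor (hv : v ≠ 0) :
    ‖blaschkeFactor v z‖ = ‖v - z‖ / ‖1 - conj v * z‖ := by
  simp [blaschkeFactor, hv]

theorem norm_blaschkeFactor_le_one (hv₀ : v ≠ 0) (hv : ‖v‖ ≤ 1) (hz : ‖z‖ < 1) :
    ‖blaschkeFactor v z‖ ≤ 1 := by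
  rw [norm_blaschkeFactor hv₀]
  exact div_le_one_of_le₀ (norm_sub_le_norm_one_sub_conj_mul hv hz.le) (norm_nonneg _)

theorem norm_blaschkeFactor_le (hv₀ : v ≠ 0) (hv : ‖v‖ < 1) (hz : ‖z‖ ≤ 1) :
    ‖blaschkeFactor v z‖ ≤ ‖z - v‖ / (1 - ‖v‖) := by
  rw [norm_blaschkeFactor hv₀, norm_sub_rev]
  refine div_le_div_of_nonneg_left (norm_nonneg _) (by linarith) ?_
  have := one_sub_norm_mul_norm_le_norm_one_sub_conj_mul v z
  nlinarith [norm_nonneg v]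

theorem norm_blaschkeFactor_sub_one_le (hv₀ : v ≠ 0) (hv : ‖v‖ ≤ 1) (hz : ‖z‖ < 1) :
    ‖blaschkeFactor v z - 1‖ ≤ 2 * (1 - ‖v‖) / (1 - ‖z‖) := by
  have hvz := one_sub_conj_mul_ne_zero hv hz
  have hv' : (‖v‖ : ℂ) ≠ 0 := by simpa using hv₀
  have hsub : blaschkeFactor v z - 1
      = ((‖v‖ - 1 : ℝ) : ℂ) * (‖v‖ + conj v * z) / (‖v‖ * (1 - conj v * z)) := by
    rw [blaschkeFactor]
    field_simp
    push_cast
    linear_combination Complex.conj_mul' v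
  have hnum : ‖(‖v‖ + conj v * z : ℂ)‖ ≤ 2 * ‖v‖ := by
    calc ‖(‖v‖ + conj v * z : ℂ)‖ ≤ ‖v‖ + ‖v‖ * ‖z‖ := by
          simpa using norm_add_le (‖v‖ : ℂ) (conj v * z)
      _ ≤ 2 * ‖v‖ := by nlinarith [norm_nonneg v]
  have hden : 1 - ‖z‖ ≤ ‖1 - conj v * z‖ := by
    have := one_sub_norm_mul_norm_le_norm_one_sub_conj_mul v z
    nlinarith [norm_nonneg z]
  have hv0 : 0 < ‖v‖ := norm_pos_iff.2 hv₀
  rw [hsub, norm_div, norm_mul, norm_mul, Complex.norm_real, Complex.norm_real, norm_norm,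
    Real.norm_of_nonpos (by linarith)]
  calc -(‖v‖ - 1) * ‖(‖v‖ + conj v * z : ℂ)‖ / (‖v‖ * ‖1 - conj v * z‖)
      ≤ (1 - ‖v‖) * (2 * ‖v‖) / (‖v‖ * (1 - ‖z‖)) := by
        gcongr
        linarith
    _ = 2 * (1 - ‖v‖) / (1 - ‖z‖) := by field_simp

theorem blaschkeFactor_ne_zero (hv₀ : v ≠ 0) (hv : ‖v‖ ≤ 1) (hz : ‖z‖ < 1) (hzv : z ≠ v) :
    blaschkeFactor v z ≠ 0 := by
  simp [blaschkeFactor, hv₀, sub_ne_zero.2 hzv.symm, one_sub_conj_mul_ne_zero hv hz]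

end BlaschkeFactor

section BlaschkeProduct

variable {v : ℕ → ℂ}

noncomputable def blaschkeProduct (v : ℕ → ℂ) (z : ℂ) : ℂ :=
  ∏' i, blaschkeFactor (v i) z

theorem summable_norm_blaschkeFactor_sub_one (hv : ∀ i, v i ≠ 0 ∧ ‖v i‖ < 1)
    (hB : Summable fun i => 1 - ‖v i‖) {z : ℂ} (hz : ‖z‖ < 1) :
    Summable fun i => ‖blaschkeFactor (v i) z - 1‖ :=
  (hB.mul_left (2 / (1 - ‖z‖))).of_nonneg_of_le (fun _ => norm_nonneg _) fun i =>
    (norm_blaschkeFactor_sub_one_le (hv i).1 (hv i).2.le hz).trans_eq (by ring)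

theorem tendsto_prod_range_blaschkeProduct (hv : ∀ i, v i ≠ 0 ∧ ‖v i‖ < 1)
    (hB : Summable fun i => 1 - ‖v i‖) {z : ℂ} (hz : ‖z‖ < 1) :
    Tendsto (fun n => ∏ i ∈ Finset.range n, blaschkeFactor (v i) z) atTop
      (𝓝 (blaschkeProduct v z)) := by
  have := multipliable_one_add_of_summable (summable_norm_blaschkeFactor_sub_one hv hB hz)
  simp only [add_sub_cancel] at this
  exact this.tendsto_prod_tprod_nat

theorem blaschkeProduct_ne_zero (hv : ∀ i, v i ≠ 0 ∧ ‖v i‖ < 1)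
    (hB : Summable fun i => 1 - ‖v i‖) {z : ℂ} (hz : ‖z‖ < 1) (hzv : z ∉ range v) :
    blaschkeProduct v z ≠ 0 := by
  have := tprod_one_add_ne_zero_of_summable
    (fun i => by
      simpa using blaschkeFactor_ne_zero (hv i).1 (hv i).2.le hz fun h => hzv ⟨i, h.symm⟩)
    (summable_norm_blaschkeFactor_sub_one hv hB hz)
  simpa [blaschkeProduct] using this

theorem norm_blaschkeProduct_le (hv : ∀ i, v i ≠ 0 ∧ ‖v i‖ < 1)
    (hB : Summable fun i => 1 - ‖v i‖) {z₀ z : ℂ} (hz : ‖z‖ < 1)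
    {I : Finset ℕ} (hI : ∀ i ∈ I, v i = z₀) :
    ‖blaschkeProduct v z‖ ≤ (‖z - z₀‖ / (1 - ‖z₀‖)) ^ I.card := by
  refine le_of_tendsto (tendsto_prod_range_blaschkeProduct hv hB hz).norm ?_
  filter_upwards [tendsto_finset_range.eventually (eventually_ge_atTop I)] with n hIn
  calc ‖∏ i ∈ Finset.range n, blaschkeFactor (v i) z‖
      = ∏ i ∈ Finset.range n, ‖blaschkeFactor (v i) z‖ := norm_prod _ _
    _ ≤ ∏ i ∈ I, ‖blaschkeFactor (v i) z‖ :=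
        Finset.prod_le_prod_of_subset_of_le_one hIn (fun _ _ => norm_nonneg _)
          fun i _ _ => norm_blaschkeFactor_le_one (hv i).1 (hv i).2.le hz
    _ ≤ ∏ _i ∈ I, ‖z - z₀‖ / (1 - ‖z₀‖) :=
        Finset.prod_le_prod (fun _ _ => norm_nonneg _) fun i hi => by
          simpa [hI i hi] using norm_blaschkeFactor_le (hv i).1 (hv i).2 hz.le
    _ = (‖z - z₀‖ / (1 - ‖z₀‖)) ^ I.card := Finset.prod_const _

theorem blaschkeProduct_isBigO_sub_pow (hv : ∀ i, v i ≠ 0 ∧ ‖v i‖ < 1)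
    (hB : Summable fun i => 1 - ‖v i‖) {z₀ : ℂ} (hz₀ : ‖z₀‖ < 1)
    {I : Finset ℕ} (hI : ∀ i ∈ I, v i = z₀) :
    blaschkeProduct v =O[𝓝 z₀] fun z => (z - z₀) ^ I.card := by
  refine IsBigO.of_bound ((1 - ‖z₀‖)⁻¹ ^ I.card) ?_
  filter_upwards [Metric.isOpen_ball.mem_nhds (mem_ball_zero_iff.2 hz₀)] with z hz
  rw [norm_pow, ← mul_pow, ← div_eq_inv_mul]
  exact norm_blaschkeProduct_le hv hB (mem_ball_zero_iff.1 hz) hI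

theorem finite_setOf_eq_of_summable_one_sub_norm (hB : Summable fun i => 1 - ‖v i‖) {z₀ : ℂ}
    (hz₀ : ‖z₀‖ < 1) : {i | v i = z₀}.Finite := by
  have := hB.tendsto_atTop_zero.eventually (gt_mem_nhds (sub_pos.2 hz₀))
  rw [← Nat.cofinite_eq_atTop] at this
  exact (eventually_cofinite.1 this).subset fun i (hi : v i = z₀) => by simp [hi]

end BlaschkeProduct

section BlaschkeOperator

variable {E : Type*} [NormedAddCommGroup E] [InnerProductSpace ℂ E]

theorem norm_smul_sub_le_norm_sub_conj_smul {v : ℂ} (hv : ‖v‖ ≤ 1) {x y : E}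
    (hyx : ‖y‖ ≤ ‖x‖) : ‖v • x - y‖ ≤ ‖x - conj v • y‖ := by
  have key :
      ‖x - conj v • y‖ ^ 2 - ‖v • x - y‖ ^ 2 = (1 - ‖v‖ ^ 2) * (‖x‖ ^ 2 - ‖y‖ ^ 2) := by
    rw [norm_sub_sq (𝕜 := ℂ), norm_sub_sq (𝕜 := ℂ), inner_smul_left, inner_smul_right,
      norm_smul, norm_smul, Complex.norm_conj]
    ring
  have : 0 ≤ (1 - ‖v‖ ^ 2) * (‖x‖ ^ 2 - ‖y‖ ^ 2) :=
    mul_nonneg (by nlinarith [norm_nonneg v]) (by nlinarith [norm_nonneg y])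
  exact le_of_sq_le_sq (by linarith) (norm_nonneg _)

noncomputable def blaschkeOp (S : E →L[ℂ] E) (v : ℂ) : E →L[ℂ] E :=
  (conj v / ‖v‖ : ℂ) • ((v • 1 - S) * Ring.inverse (1 - conj v • S))

theorem blaschkeOp_apply (S : E →L[ℂ] E) (v : ℂ) (y : E) :
    blaschkeOp S v y = (conj v / ‖v‖ : ℂ) • (v • Ring.inverse (1 - conj v • S) y
      - S (Ring.inverse (1 - conj v • S) y)) := by
  simp [blaschkeOp]

variable [CompleteSpace E] {S : E →L[ℂ] E}

theorem isUnit_one_sub_smul_of_norm_le_one (hS : ‖S‖ ≤ 1) {c : ℂ} (hc : ‖c‖ < 1) :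
    IsUnit (1 - c • S) := by
  have : ‖c • S‖ < 1 := (norm_smul_le c S).trans_lt (by nlinarith [norm_nonneg c, norm_nonneg S])
  exact (Units.oneSub (c • S) this).isUnit

theorem one_sub_smul_ringInverse_apply (hS : ‖S‖ ≤ 1) {c : ℂ} (hc : ‖c‖ < 1) (y : E) :
    Ring.inverse (1 - c • S) y - c • S (Ring.inverse (1 - c • S) y) = y := by
  simpa using congr($(Ring.mul_inverse_cancel _ (isUnit_one_sub_smul_of_norm_le_one hS hc)) y)

theorem norm_blaschkeOp_apply_le (hS : ‖S‖ ≤ 1) {v : ℂ} (hv : ‖v‖ < 1) (y : E) :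
    ‖blaschkeOp S v y‖ ≤ ‖y‖ := by
  set x := Ring.inverse (1 - conj v • S) y
  have hx : x - conj v • S x = y := by
    simpa using one_sub_smul_ringInverse_apply hS (c := conj v) (by simpa using hv) y
  have hc : ‖(conj v / ‖v‖ : ℂ)‖ ≤ 1 := by
    rcases eq_or_ne v 0 with rfl | hv₀ <;> simp [*]
  have hSx : ‖S x‖ ≤ ‖x‖ := (S.le_opNorm x).trans (by nlinarith [norm_nonneg x])
  calc ‖blaschkeOp S v y‖ = ‖(conj v / ‖v‖ : ℂ)‖ * ‖v • x - S x‖ := by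
        rw [blaschkeOp_apply, norm_smul]
    _ ≤ ‖v • x - S x‖ := mul_le_of_le_one_left (norm_nonneg _) hc
    _ ≤ ‖x - conj v • S x‖ := norm_smul_sub_le_norm_sub_conj_smul hv.le hSx
    _ = ‖y‖ := by rw [hx]

noncomputable def blaschkeSeq (S : E →L[ℂ] E) (v : ℕ → ℂ) (g : E) : ℕ → E
  | 0 => g
  | n + 1 => blaschkeOp S (v n) (blaschkeSeq S v g n)

theorem norm_blaschkeSeq_le (hS : ‖S‖ ≤ 1) {v : ℕ → ℂ} (hv : ∀ i, ‖v i‖ < 1) (g : E) :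
    ∀ n, ‖blaschkeSeq S v g n‖ ≤ ‖g‖
  | 0 => le_rfl
  | n + 1 => (norm_blaschkeOp_apply_le hS (hv n) _).trans (norm_blaschkeSeq_le hS hv g n)

end BlaschkeOperator

section WeakLimit

variable {𝕜 E : Type*} [RCLike 𝕜] [NormedAddCommGroup E] [InnerProductSpace 𝕜 E]
  {x : ℕ → E} {C : ℝ}

theorem isClosed_setOf_exists_tendsto_inner (hx : ∀ n, ‖x n‖ ≤ C) :
    IsClosed {y : E | ∃ l, Tendsto (fun n => ⟪x n, y⟫_𝕜) atTop (𝓝 l)} := by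
  refine isClosed_of_closure_subset fun y hy => cauchySeq_tendsto_of_complete <|
    Metric.cauchySeq_iff'.2 fun ε hε => ?_
  have hK : 0 < max C 1 := lt_max_of_lt_right one_pos
  obtain ⟨y', ⟨l, hl⟩, hyy'⟩ := Metric.mem_closure_iff.1 hy (ε / (3 * max C 1)) (by positivity)
  obtain ⟨N, hN⟩ := Metric.cauchySeq_iff'.1 hl.cauchySeq (ε / 3) (by positivity)
  have hclose : ∀ n, dist ⟪x n, y⟫_𝕜 ⟪x n, y'⟫_𝕜 < ε / 3 := fun n =>
    calc dist ⟪x n, y⟫_𝕜 ⟪x n, y'⟫_𝕜 ≤ ‖x n‖ * ‖y - y'‖ := by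
          rw [dist_eq_norm, ← inner_sub_right]
          exact norm_inner_le_norm _ _
      _ ≤ max C 1 * dist y y' := by
          rw [← dist_eq_norm]
          gcongr
          exact (hx n).trans (le_max_left _ _)
      _ < max C 1 * (ε / (3 * max C 1)) := by gcongr
      _ = ε / 3 := by field_simp
  refine ⟨N, fun n hn => ?_⟩
  calc dist ⟪x n, y⟫_𝕜 ⟪x N, y⟫_𝕜
      ≤ dist ⟪x n, y⟫_𝕜 ⟪x n, y'⟫_𝕜 + dist ⟪x n, y'⟫_𝕜 ⟪x N, y'⟫_𝕜
        + dist ⟪x N, y'⟫_𝕜 ⟪x N, y⟫_𝕜 := dist_triangle4 _ _ _ _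
    _ < ε := by linarith [hclose n, hclose N, hN n hn, dist_comm ⟪x N, y'⟫_𝕜 ⟪x N, y⟫_𝕜]

theorem exists_tendsto_inner_of_norm_le_of_dense [CompleteSpace E] (hx : ∀ n, ‖x n‖ ≤ C)
    {s : Set E} (hs : (Submodule.span 𝕜 s).topologicalClosure = ⊤)
    (h : ∀ y ∈ s, ∃ l, Tendsto (fun n => ⟪x n, y⟫_𝕜) atTop (𝓝 l)) :
    ∃ x₀ : E, ∀ y, Tendsto (fun n => ⟪x n, y⟫_𝕜) atTop (𝓝 ⟪x₀, y⟫_𝕜) := by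
  let M : Submodule 𝕜 E :=
    { carrier := {y | ∃ l, Tendsto (fun n => ⟪x n, y⟫_𝕜) atTop (𝓝 l)}
      add_mem' := fun ⟨l, hl⟩ ⟨l', hl'⟩ => ⟨l + l', by simpa [inner_add_right] using hl.add hl'⟩
      zero_mem' := ⟨0, by simp⟩
      smul_mem' := fun c _ ⟨l, hl⟩ => ⟨c * l, by simpa [inner_smul_right] using hl.const_mul c⟩ }
  have hM : (Submodule.span 𝕜 s).topologicalClosure ≤ M :=
    Submodule.topologicalClosure_minimal _ (Submodule.span_le.2 h)
      (isClosed_setOf_exists_tendsto_inner hx)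
  choose L hL using fun y => hM (hs ▸ Submodule.mem_top (x := y))
  let Λ : E →L[𝕜] 𝕜 :=
    continuousLinearMapOfTendsto (fun n => innerSL 𝕜 (x n)) (tendsto_pi_nhds.2 hL)
  exact ⟨(InnerProductSpace.toDual 𝕜 E).symm Λ, fun y => by
    rw [InnerProductSpace.toDual_symm_apply]
    exact hL y⟩

end WeakLimit

namespace RKFramework

variable (F : RKFramework Ω H)

theorem ι_one_sub_smul_S_apply (c : ℂ) (x : H) {z : ℂ} (hz : z ∈ Ω) :
    F.ι (x - c • F.S x) z = (1 - c * z) * F.ι x z := by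
  simp only [map_sub, map_smul, Pi.sub_apply, Pi.smul_apply, smul_eq_mul, F.ι_S x z hz]
  ring

theorem ι_blaschkeOp_apply (hS : ‖F.S‖ ≤ 1) {v : ℂ} (hv : ‖v‖ < 1) (y : H) {z : ℂ}
    (hz : z ∈ Ω) (hvz : 1 - conj v * z ≠ 0) :
    F.ι (blaschkeOp F.S v y) z = blaschkeFactor v z * F.ι y z := by
  rw [blaschkeOp_apply]
  set x := Ring.inverse (1 - conj v • F.S) y
  have hx : F.ι y z = (1 - conj v * z) * F.ι x z := by
    rw [← F.ι_one_sub_smul_S_apply _ _ hz,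
      one_sub_smul_ringInverse_apply hS (c := conj v) (by simpa using hv) y]
  rw [hx, blaschkeFactor]
  simp only [map_smul, map_sub, Pi.smul_apply, Pi.sub_apply, smul_eq_mul, F.ι_S x z hz]
  field_simp

theorem ι_blaschkeSeq_apply (hS : ‖F.S‖ ≤ 1) {v : ℕ → ℂ} (hv : ∀ i, ‖v i‖ < 1) (g : H)
    {z : ℂ} (hz : z ∈ Ω) (hz₁ : ‖z‖ < 1) :
    ∀ n, F.ι (blaschkeSeq F.S v g n) z =
      (∏ i ∈ Finset.range n, blaschkeFactor (v i) z) * F.ι g z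
  | 0 => by simp [blaschkeSeq]
  | n + 1 => by
    rw [blaschkeSeq,
      F.ι_blaschkeOp_apply hS (hv n) _ hz (one_sub_conj_mul_ne_zero (hv n).le hz₁),
      ι_blaschkeSeq_apply hS hv g hz hz₁ n, Finset.prod_range_succ]
    ring

theorem analyticAt_ι (f : H) {z : ℂ} (hz : z ∈ Ω) : AnalyticAt ℂ (F.ι f) z :=
  (F.analytic f).analyticAt (F.isOpen.mem_nhds hz)

theorem topologicalClosure_span_k : (Submodule.span ℂ (F.k '' Ω)).topologicalClosure = ⊤ := by
  rw [Submodule.topologicalClosure_eq_top_iff, Submodule.eq_bot_iff]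
  intro x hx
  refine F.ι_inj x 0 fun z hz => ?_
  rw [← F.reproducing z hz, map_zero]
  exact (Submodule.mem_orthogonal _ x).1 hx _ (Submodule.subset_span ⟨z, hz, rfl⟩)

theorem exists_ι_apply_ne_zero_notMem {g : H} (hg : g ≠ 0) {s : Set ℂ} (hs : s.Countable) :
    ∃ z ∈ Ω, z ∉ s ∧ F.ι g z ≠ 0 := by
  have hopen : IsOpen (Ω ∩ F.ι g ⁻¹' {0}ᶜ) :=
    (F.analytic g).continuousOn.isOpen_inter_preimage F.isOpen isOpen_compl_singleton
  have hne : (Ω ∩ F.ι g ⁻¹' {0}ᶜ).Nonempty := by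
    by_contra! h
    refine hg (F.ι_inj g 0 fun z hz => ?_)
    by_contra hgz
    exact h.subset ⟨hz, by simpa using hgz⟩
  obtain ⟨z, ⟨hzΩ, hgz⟩, hzs⟩ := (hs.dense_compl ℂ).inter_open_nonempty _ hopen hne
  exact ⟨z, hzΩ, hzs, hgz⟩

end RKFramework

theorem RKFramework.exists_ι_eq_blaschkeProduct_mul
    (F : RKFramework (Metric.ball (0 : ℂ) 1) H) (hS : ‖F.S‖ ≤ 1) {v : ℕ → ℂ}
    (hv : ∀ i, v i ≠ 0 ∧ ‖v i‖ < 1)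
    (hB : Summable fun i => 1 - ‖v i‖) (g : H) :
    ∃ h : H, ∀ z ∈ Metric.ball (0 : ℂ) 1, F.ι h z = blaschkeProduct v z * F.ι g z := by
  have hlim : ∀ z ∈ Metric.ball (0 : ℂ) 1,
      Tendsto (fun n => ⟪blaschkeSeq F.S v g n, F.k z⟫_ℂ) atTop
        (𝓝 (conj (blaschkeProduct v z * F.ι g z))) := fun z hz => by
    have hz₁ := mem_ball_zero_iff.1 hz
    simp only [← inner_conj_symm _ (F.k z), F.reproducing z hz,
      F.ι_blaschkeSeq_apply hS (fun i => (hv i).2) g hz hz₁]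
    exact ((tendsto_prod_range_blaschkeProduct hv hB hz₁).mul_const _).star
  obtain ⟨h, hh⟩ := exists_tendsto_inner_of_norm_le_of_dense
    (norm_blaschkeSeq_le hS (fun i => (hv i).2) g) F.topologicalClosure_span_k
    (by rintro _ ⟨z, hz, rfl⟩; exact ⟨_, hlim z hz⟩)
  refine ⟨h, fun z hz => ?_⟩
  rw [← F.reproducing z hz, ← inner_conj_symm, tendsto_nhds_unique (hh (F.k z)) (hlim z hz),
    Complex.conj_conj]

theorem stmt8_general (F : RKFramework (Metric.ball (0 : ℂ) 1) H) (hS : ‖F.S‖ ≤ 1)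
    (w : ℕ → ℂ)
    (g : H) (hg : g ≠ 0)
    (hgz : ∀ z ∈ Metric.ball (0 : ℂ) 1, ∀ s : ℕ,
      (s : ℕ∞) < {j : ℕ | w j = z}.encard →
        iteratedDerivWithin s (F.ι g) (Metric.ball (0 : ℂ) 1) z = 0)
    (v : ℕ → ℂ) (hv : ∀ i, v i ∈ Metric.ball (0 : ℂ) 1 ∧ v i ≠ 0)
    (hBlaschke : Summable fun i : ℕ => 1 - ‖v i‖) :
    ∃ h : H, h ≠ 0 ∧ ∀ z ∈ Metric.ball (0 : ℂ) 1, ∀ s : ℕ,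
      (s : ℕ∞) < {j : ℕ | w j = z}.encard + {i : ℕ | v i = z}.encard →
        iteratedDerivWithin s (F.ι h) (Metric.ball (0 : ℂ) 1) z = 0 := by
  have hv' : ∀ i, v i ≠ 0 ∧ ‖v i‖ < 1 := fun i => ⟨(hv i).2, mem_ball_zero_iff.1 (hv i).1⟩
  obtain ⟨h, hh⟩ := F.exists_ι_eq_blaschkeProduct_mul hS hv' hBlaschke g
  refine ⟨h, ?_, fun z hz => ?_⟩
  · rintro rfl
    obtain ⟨z, hz, hzv, hgz⟩ := F.exists_ι_apply_ne_zero_notMem hg (countable_range v)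
    have hB := blaschkeProduct_ne_zero hv' hBlaschke (mem_ball_zero_iff.1 hz) hzv
    simpa [hB, hgz] using hh z hz
  · have hz₁ := mem_ball_zero_iff.1 hz
    have hfin := finite_setOf_eq_of_summable_one_sub_norm hBlaschke hz₁
    have hg_ord : {j | w j = z}.encard ≤ analyticOrderAt (F.ι g) z :=
      ((F.analyticAt_ι g hz).le_analyticOrderAt_iff_iteratedDerivWithin_eq_zero
        Metric.isOpen_ball hz).2 (hgz z hz)
    have hh_ord : analyticOrderAt (F.ι g) z + hfin.toFinset.card ≤ analyticOrderAt (F.ι h) z :=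
      (F.analyticAt_ι h hz).analyticOrderAt_add_le_of_eventuallyEq_mul (F.analyticAt_ι g hz)
        (eventually_of_mem (Metric.isOpen_ball.mem_nhds hz) hh)
        (blaschkeProduct_isBigO_sub_pow hv' hBlaschke hz₁ fun i hi => hfin.mem_toFinset.1 hi)
    rw [hfin.encard_eq_coe_toFinset_card]
    exact ((F.analyticAt_ι h hz).le_analyticOrderAt_iff_iteratedDerivWithin_eq_zero
      Metric.isOpen_ball hz).1 ((add_le_add hg_ord le_rfl).trans hh_ord)

/-- Theorem 4.7: if `Ω = 𝔻` and `‖S‖ ≤ 1`, then the union of a zero set for `H`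
(counted with multiplicities) with a Blaschke sequence is again a zero set for `H`. -/
theorem stmt8 (F : RKFramework (Metric.ball (0 : ℂ) 1) H) (hS : ‖F.S‖ ≤ 1)
    (w : ℕ → ℂ) (hw : ∀ j, w j ∈ Metric.ball (0 : ℂ) 1 ∧ w j ≠ 0)
    (g : H) (hg : g ≠ 0)
    (hgz : ∀ z ∈ Metric.ball (0 : ℂ) 1, ∀ s : ℕ,
      (s : ℕ∞) < {j : ℕ | w j = z}.encard →
        iteratedDerivWithin s (F.ι g) (Metric.ball (0 : ℂ) 1) z = 0)
    (v : ℕ → ℂ) (hv : ∀ i, v i ∈ Metric.ball (0 : ℂ) 1 ∧ v i ≠ 0)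
    (hBlaschke : Summable fun i : ℕ => 1 - ‖v i‖) :
    ∃ h : H, h ≠ 0 ∧ ∀ z ∈ Metric.ball (0 : ℂ) 1, ∀ s : ℕ,
      (s : ℕ∞) < {j : ℕ | w j = z}.encard + {i : ℕ | v i = z}.encard →
        iteratedDerivWithin s (F.ι h) (Metric.ball (0 : ℂ) 1) z = 0 :=
  stmt8_general F hS w g hg hgz v hv hBlaschke
end

section
/- Assume the Framework. Let f ∈ H ∖ {0} and let J := f − P_{[zf]} f be the S-inner function associated with f. If w ∈ Ω satisfies (ι J)(w) = 0 but (ι f)(w) ≠ 0, then Q_w J ∈ [f], the closed linear span of {S^n f : n ≥ 0}. -/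
open scoped ComplexInnerProductSpace

variable {Ω : Set ℂ} {H : Type*} [NormedAddCommGroup H] [InnerProductSpace ℂ H] [CompleteSpace H]

/- Subtracting from `Q_w` the rank-one correction `g ↦ (g(w) / f(w)) Q_w f` gives a bounded
operator `T` that sends each `S^n f` to `∑_{k<n} w^{n-1-k} S^k f ∈ [f]`, so by continuity `T`
maps `[f]` into itself. Now `J = f - P_{[zf]} f ∈ [f]` and `J(w) = 0`, so `Q_w J = T J ∈ [f]`. -/

namespace RKFramework

variable {Ω : Set ℂ} {H : Type*} [NormedAddCommGroup H] [InnerProductSpace ℂ H]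
  [CompleteSpace H] (F : RKFramework Ω H)

theorem eq_of_eqOn_diff_singleton {w : ℂ} {g₁ g₂ : H}
    (h : Set.EqOn (F.ι g₁) (F.ι g₂) (Ω \ {w})) : g₁ = g₂ := by
  refine F.ι_inj _ _ (h.of_subset_closure (F.analytic g₁).continuousOn
    (F.analytic g₂).continuousOn Set.sdiff_subset fun z hz => ?_)
  have hdense : z ∈ Ω ∩ closure {w}ᶜ := ⟨hz, by simp⟩
  exact F.isOpen.inter_closure hdense

theorem ι_pow_apply (f : H) (n : ℕ) {z : ℂ} (hz : z ∈ Ω) :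
    F.ι ((F.S ^ n) f) z = z ^ n * F.ι f z := by
  induction n with
  | zero => simp
  | succ n ih =>
    rw [pow_succ', mul_apply_eq_comp, F.ι_S _ z hz, ih]
    ring

theorem Q_pow_apply_sub {w : ℂ} (hw : w ∈ Ω) (f : H) (n : ℕ) :
    F.Q w ((F.S ^ n) f) - w ^ n • F.Q w f
      = ∑ k ∈ Finset.range n, w ^ (n - 1 - k) • (F.S ^ k) f := by
  refine F.eq_of_eqOn_diff_singleton (w := w) fun z ⟨hz, (hzw : z ≠ w)⟩ => ?_
  simp only [map_sub, map_smul, map_sum, Pi.sub_apply, Pi.smul_apply, Finset.sum_apply,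
    smul_eq_mul, F.ι_Q w hw _ z hz hzw, F.ι_pow_apply _ _ hz, F.ι_pow_apply _ _ hw]
  have hsum : ∑ k ∈ Finset.range n, w ^ (n - 1 - k) * (z ^ k * F.ι f z)
      = (∑ k ∈ Finset.range n, z ^ k * w ^ (n - 1 - k)) * F.ι f z := by
    rw [Finset.sum_mul]
    exact Finset.sum_congr rfl fun _ _ => by ring
  rw [hsum]
  field_simp
  linear_combination (-F.ι f z) * geom_sum₂_mul z w n

theorem pow_apply_mem_fullSpan (f : H) (n : ℕ) : (F.S ^ n) f ∈ F.fullSpan f :=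
  Submodule.le_topologicalClosure _ (Submodule.subset_span ⟨n, rfl⟩)

theorem J_mem_fullSpan (f : H) : F.J f ∈ F.fullSpan f := by
  have hzspan : F.zspan f ≤ F.fullSpan f :=
    Submodule.topologicalClosure_mono <| Submodule.span_mono fun _ ⟨n, _, hx⟩ => ⟨n, hx.symm⟩
  exact Submodule.sub_mem _ (by simpa using F.pow_apply_mem_fullSpan f 0)
    (hzspan (Submodule.coe_mem _))

theorem mapsTo_fullSpan {f : H} {T : H →L[ℂ] H}
    (hT : ∀ n : ℕ, T ((F.S ^ n) f) ∈ F.fullSpan f) :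
    Set.MapsTo T (F.fullSpan f) (F.fullSpan f) := by
  have hle : F.fullSpan f ≤ (F.fullSpan f).comap (T : H →ₗ[ℂ] H) := by
    refine Submodule.topologicalClosure_minimal _ ?_
      ((Submodule.isClosed_topologicalClosure _).preimage T.continuous)
    rw [Submodule.span_le]
    rintro _ ⟨n, rfl⟩
    exact hT n
  exact fun g hg => hle hg

theorem Q_sub_smul_Q_mem_fullSpan {f : H} {w : ℂ} (hw : w ∈ Ω) (hfw : F.ι f w ≠ 0)
    {g : H} (hg : g ∈ F.fullSpan f) :
    F.Q w g - (F.ι g w / F.ι f w) • F.Q w f ∈ F.fullSpan f := by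
  let T : H →L[ℂ] H :=
    F.Q w - (innerSL ℂ (F.k w)).smulRight ((F.ι f w)⁻¹ • F.Q w f)
  have hT : ∀ x, T x = F.Q w x - (F.ι x w / F.ι f w) • F.Q w f := fun x => by
    simp [T, F.reproducing w hw x, smul_smul, div_eq_mul_inv]
  rw [← hT]
  refine F.mapsTo_fullSpan (fun n => ?_) hg
  rw [hT, F.ι_pow_apply f n hw, mul_div_cancel_right₀ _ hfw, F.Q_pow_apply_sub hw]
  exact Submodule.sum_mem _ fun k _ => Submodule.smul_mem _ _ (F.pow_apply_mem_fullSpan f k)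

end RKFramework

theorem stmt11_general (F : RKFramework Ω H) (f : H)
    (w : ℂ) (hwΩ : w ∈ Ω) (hJw : F.ι (F.J f) w = 0) (hfw : F.ι f w ≠ 0) :
    F.Q w (F.J f) ∈ F.fullSpan f := by
  simpa [hJw] using F.Q_sub_smul_Q_mem_fullSpan hwΩ hfw (F.J_mem_fullSpan f)

/-- Proposition 5.2: if `w` is a zero of the `S`-inner function `J = f − P_{[zf]} f`
that is not a zero of `f`, then `Q_w J ∈ [f]`. -/
theorem stmt11 (F : RKFramework Ω H) (f : H) (hf : f ≠ 0)
    (w : ℂ) (hwΩ : w ∈ Ω) (hJw : F.ι (F.J f) w = 0) (hfw : F.ι f w ≠ 0) :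
    F.Q w (F.J f) ∈ F.fullSpan f :=
  stmt11_general F f w hwΩ hJw hfw
end
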